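/- Let k ≥ 1 and let S_1, …, S_k be strings over an alphabet Σ, each of length M, where M is even, and let γ denote the empty string. If LCS(S_1, …, S_k) ≥ M/2, then δ_CE(S_1, …, S_k, γ) = M/2; and if LCS(S_1, …, S_k) < M/2, then δ_CE(S_1, …, S_k, γ) > M/2. -/

import Mathlib

/-- Cost structure for Levenshtein distance (formerly in Mathlib). -/
structure Levenshtein.Cost (α β δ : Type*) where
  delete : α → δ
  insert : β → δ
  substitute : α → β → δ

/-- The default unit cost (formerly in Mathlib). -/
def Levenshtein.defaultCost {α : Type*} [DecidableEq α] : Levenshtein.Cost α α ℕ where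
  delete _ := 1
  insert _ := 1
  substitute a b := if a = b then 0 else 1

/-- The Levenshtein distance with cost `C` (formerly in Mathlib, same recurrence). -/
def levenshtein {α β δ : Type*} [AddZeroClass δ] [Min δ] (C : Levenshtein.Cost α β δ) :
    List α → List β → δ
  | [], [] => 0
  | [], y :: ys => C.insert y + levenshtein C [] ys
  | x :: xs, [] => C.delete x + levenshtein C xs []
  | x :: xs, y :: ys =>
    min (C.delete x + levenshtein C xs (y :: ys))
      (min (C.insert y + levenshtein C (x :: xs) ys) (C.substitute x y + levenshtein C xs ys))
termination_by xs ys => xs.length + ys.length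

/-- The Levenshtein edit distance between two strings. -/
def editDist {α : Type*} [DecidableEq α] (s t : List α) : ℕ :=
  levenshtein Levenshtein.defaultCost s t

/-- The center edit distance of a family of strings:
the minimum over target strings `T` of the maximum edit distance to `T`. -/
noncomputable def centerED {α : Type*} [DecidableEq α] (L : List (List α)) : ℕ :=
  sInf { d : ℕ | ∃ T : List α, d = (L.map fun s => editDist s T).foldr max 0 }

/-- The length of a longest common subsequence of a family of strings. -/
noncomputable def lcsLen {α : Type*} (L : List (List α)) : ℕ :=
  sSup { m : ℕ | ∃ T : List α, T.length = m ∧ ∀ s ∈ L, T.Sublist s }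

/-!
Against the empty string a centre `T` costs `|T|`, and against a string `s` it costs at least
`|s| - |T|`, with equality exactly when `T` is a subsequence of `s`: an alignment of cost `d`
keeps at least `|s| - d` characters of `s`, in order, as a common subsequence of `s` and `T`.
For strings of length `2m` every centre therefore costs at least `m`, and a centre costing at
most `m` has length at most `m` and costs at most `2m - |T|` against each `Sᵢ`, so it is a
common subsequence of length `m`. Conversely, a common subsequence cut down to length `m` is a
centre of cost `m`.
-/

namespace List

theorem foldr_max_zero_le_iff {l : List ℕ} {d : ℕ} : l.foldr max 0 ≤ d ↔ ∀ x ∈ l, x ≤ d := by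
  induction l with
  | nil => simp
  | cons a l ih => simp [ih]

end List

-- For `L = []` every length is admissible and `sSup` of the unbounded set is the junk value `0`.
theorem le_lcsLen_iff {α : Type*} {L : List (List α)} (hL : L ≠ []) {n : ℕ} :
    n ≤ lcsLen L ↔ ∃ T : List α, n ≤ T.length ∧ ∀ s ∈ L, T.Sublist s := by
  obtain ⟨s₀, hs₀⟩ := List.exists_mem_of_ne_nil L hL
  have hne : {m : ℕ | ∃ T : List α, T.length = m ∧ ∀ s ∈ L, T.Sublist s}.Nonempty :=
    ⟨0, [], rfl, fun s _ ↦ s.nil_sublist⟩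
  have hbdd : BddAbove {m : ℕ | ∃ T : List α, T.length = m ∧ ∀ s ∈ L, T.Sublist s} :=
    ⟨s₀.length, by
      rintro _ ⟨T, rfl, hTL⟩
      exact (hTL s₀ hs₀).length_le⟩
  constructor
  · intro h
    obtain ⟨T, hT, hTL⟩ := Nat.sSup_mem hne hbdd
    exact ⟨T, hT ▸ h, hTL⟩
  · rintro ⟨T, hT, hTL⟩
    exact hT.trans (le_csSup hbdd ⟨T, rfl, hTL⟩)

section EditDistance

variable {α : Type*} [DecidableEq α]

@[simp] theorem editDist_nil_left (t : List α) : editDist [] t = t.length := by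
  induction t with
  | nil => simp [editDist, levenshtein]
  | cons y ys ih =>
    rw [editDist, levenshtein, ← editDist, ih]
    simp [Levenshtein.defaultCost, add_comm]

@[simp] theorem editDist_nil_right (s : List α) : editDist s [] = s.length := by
  induction s with
  | nil => simp [editDist, levenshtein]
  | cons x xs ih =>
    rw [editDist, levenshtein, ← editDist, ih]
    simp [Levenshtein.defaultCost, add_comm]

theorem editDist_cons_cons (x y : α) (xs ys : List α) :
    editDist (x :: xs) (y :: ys) =
      min (editDist xs (y :: ys) + 1)
        (min (editDist (x :: xs) ys + 1) (editDist xs ys + (if x = y then 0 else 1))) := by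
  rw [editDist, levenshtein]
  simp only [Levenshtein.defaultCost, editDist, add_comm]

theorem editDist_cons_left_le (x : α) (s t : List α) : editDist (x :: s) t ≤ editDist s t + 1 := by
  cases t with
  | nil => simp
  | cons y ys => rw [editDist_cons_cons]; exact min_le_left _ _

theorem editDist_cons_self_le (a : α) (s t : List α) :
    editDist (a :: s) (a :: t) ≤ editDist s t := by
  rw [editDist_cons_cons]
  exact (min_le_right _ _).trans ((min_le_right _ _).trans (by simp))

theorem List.Sublist.editDist_add_length_le {s t : List α} (h : t.Sublist s) :
    editDist s t + t.length ≤ s.length := by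
  induction h with
  | slnil => simp
  | @cons t s a _ ih =>
    have := editDist_cons_left_le a s t
    simp only [List.length_cons]
    omega
  | @cons_cons t s a _ ih =>
    have := editDist_cons_self_le a s t
    simp only [List.length_cons]
    omega

theorem exists_common_sublist_length_le_editDist_add (s t : List α) :
    ∃ u : List α, u.Sublist s ∧ u.Sublist t ∧ s.length ≤ editDist s t + u.length := by
  induction s generalizing t with
  | nil => exact ⟨[], .slnil, t.nil_sublist, by simp⟩
  | cons x xs ihs =>
    induction t with
    | nil => exact ⟨[], xs.nil_sublist.cons x, .slnil, by simp⟩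
    | cons y ys iht =>
      obtain ⟨u₁, hu₁s, hu₁t, hu₁⟩ := ihs (y :: ys)
      obtain ⟨u₂, hu₂s, hu₂t, hu₂⟩ := iht
      obtain ⟨u₃, hu₃s, hu₃t, hu₃⟩ := ihs ys
      have hdel : ∃ u : List α, u.Sublist (x :: xs) ∧ u.Sublist (y :: ys) ∧
          (x :: xs).length ≤ editDist xs (y :: ys) + 1 + u.length :=
        ⟨u₁, hu₁s.cons x, hu₁t, by simp only [List.length_cons]; omega⟩
      have hins : ∃ u : List α, u.Sublist (x :: xs) ∧ u.Sublist (y :: ys) ∧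
          (x :: xs).length ≤ editDist (x :: xs) ys + 1 + u.length :=
        ⟨u₂, hu₂s, hu₂t.cons y, by omega⟩
      have hsub : ∃ u : List α, u.Sublist (x :: xs) ∧ u.Sublist (y :: ys) ∧
          (x :: xs).length ≤ editDist xs ys + (if x = y then 0 else 1) + u.length := by
        by_cases hxy : x = y
        · subst hxy
          refine ⟨x :: u₃, hu₃s.cons_cons x, hu₃t.cons_cons x, ?_⟩
          simp only [List.length_cons]
          omega
        · exact ⟨u₃, hu₃s.cons x, hu₃t.cons y, by simp only [List.length_cons, if_neg hxy]; omega⟩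
      rw [editDist_cons_cons]
      obtain h | h := min_choice (editDist xs (y :: ys) + 1) _
      · rwa [h]
      obtain h' | h' := min_choice (editDist (x :: xs) ys + 1) _
      · rwa [h, h']
      · rwa [h, h']

theorem length_le_editDist_add_length (s t : List α) : s.length ≤ editDist s t + t.length := by
  obtain ⟨u, -, hut, hu⟩ := exists_common_sublist_length_le_editDist_add s t
  have := hut.length_le
  omega

theorem editDist_add_length_le_iff_sublist {s t : List α} :
    editDist s t + t.length ≤ s.length ↔ t.Sublist s := by
  refine ⟨fun h ↦ ?_, List.Sublist.editDist_add_length_le⟩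
  obtain ⟨u, hus, hut, hu⟩ := exists_common_sublist_length_le_editDist_add s t
  rwa [← hut.eq_of_length_le (by omega)]

theorem centerED_le_iff {L : List (List α)} {d : ℕ} :
    centerED L ≤ d ↔ ∃ T : List α, ∀ s ∈ L, editDist s T ≤ d := by
  have hne : {d : ℕ | ∃ T : List α, d = (L.map fun s => editDist s T).foldr max 0}.Nonempty :=
    ⟨_, [], rfl⟩
  constructor
  · intro h
    obtain ⟨T, hT⟩ := Nat.sInf_mem hne
    refine ⟨T, fun s hs ↦ ?_⟩
    rw [centerED, hT, List.foldr_max_zero_le_iff] at h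
    exact h _ (List.mem_map_of_mem hs)
  · rintro ⟨T, hT⟩
    rw [centerED]
    refine le_trans (Nat.sInf_le ⟨T, rfl⟩) (List.foldr_max_zero_le_iff.mpr ?_)
    simpa using hT

theorem length_le_two_mul_centerED_append_nil {L : List (List α)} {s : List α} (hs : s ∈ L) :
    s.length ≤ 2 * centerED (L ++ [[]]) := by
  obtain ⟨T, hT⟩ := centerED_le_iff.mp (le_refl (centerED (L ++ [[]])))
  have hsT := hT s (List.mem_append_left _ hs)
  have hnilT := hT [] (List.mem_append_right _ (List.mem_singleton_self _))
  have := length_le_editDist_add_length s T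
  rw [editDist_nil_left] at hnilT
  omega

theorem centerED_append_nil_le_iff {L : List (List α)} (hL : L ≠ []) {m : ℕ}
    (hlen : ∀ s ∈ L, s.length = 2 * m) :
    centerED (L ++ [[]]) ≤ m ↔ m ≤ lcsLen L := by
  simp only [centerED_le_iff, le_lcsLen_iff hL, List.forall_mem_append, List.forall_mem_singleton,
    editDist_nil_left]
  constructor
  · rintro ⟨T, hT, hTm⟩
    obtain ⟨s₀, hs₀⟩ := List.exists_mem_of_ne_nil L hL
    have := length_le_editDist_add_length s₀ T
    have := hT s₀ hs₀
    have := hlen s₀ hs₀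
    refine ⟨T, by omega, fun s hs ↦ editDist_add_length_le_iff_sublist.mp ?_⟩
    have := hT s hs
    have := hlen s hs
    omega
  · rintro ⟨T, hT, hTL⟩
    refine ⟨T.take m, fun s hs ↦ ?_, List.length_take_le m T⟩
    have := ((T.take_sublist m).trans (hTL s hs)).editDist_add_length_le
    rw [List.length_take_of_le hT, hlen s hs] at this
    omega

end EditDistance

/-- For `k ≥ 1` strings `S₁, …, S_k`, each of even length `M`, and the
empty string `γ`: if `LCS(S₁, …, S_k) ≥ M/2` then `δ_CE(S₁, …, S_k, γ) = M/2`, and if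
`LCS(S₁, …, S_k) < M/2` then `δ_CE(S₁, …, S_k, γ) > M/2`. -/
theorem center_edit_distance_with_empty_string
    {α : Type*} [DecidableEq α] (k M : ℕ) (hk : 1 ≤ k) (hM : 2 ∣ M)
    (S : Fin k → List α) (hlen : ∀ i, (S i).length = M) :
    (M / 2 ≤ lcsLen (List.ofFn S) →
      centerED (List.ofFn S ++ [([] : List α)]) = M / 2) ∧
    (lcsLen (List.ofFn S) < M / 2 →
      M / 2 < centerED (List.ofFn S ++ [([] : List α)])) := by
  obtain ⟨m, rfl⟩ := hM
  rw [Nat.mul_div_cancel_left m two_pos]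
  have hS : List.ofFn S ≠ [] := mt List.ofFn_eq_nil_iff.mp (by omega)
  have hlenS : ∀ s ∈ List.ofFn S, s.length = 2 * m := by
    simpa [List.forall_mem_ofFn_iff] using hlen
  have key := centerED_append_nil_le_iff hS hlenS
  have lower : m ≤ centerED (List.ofFn S ++ [([] : List α)]) := by
    have := length_le_two_mul_centerED_append_nil (L := List.ofFn S)
      (List.mem_ofFn.mpr ⟨⟨0, hk⟩, rfl⟩)
    rw [hlen] at this
    omega
  exact ⟨fun h ↦ le_antisymm (key.mpr h) lower, fun h ↦ lt_of_not_ge (mt key.mp (not_le.mpr h))⟩
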